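/- arXiv:2212.02865 — 6 statements merged into one kernel-verified Lean document; each statement's English description precedes it below -/
import Mathlib

section
/- If there exists a perfect pairing list with parameters N_teams, N_flights, N_inrace (with N_inrace dividing N_teams and N_teams > 1), then (N_teams − 1) divides N_flights·(N_inrace − 1). -/
open Finset

/-- `F` is a pairing list: each flight `i` assigns each team a race, and each
race of each flight contains exactly `Nr` teams. -/
def IsPairingList {ι : Type} [Fintype ι] {Nt m : ℕ} (Nr : ℕ)
    (F : ι → Fin Nt → Fin m) : Prop :=
  ∀ (i : ι) (r : Fin m), (Finset.univ.filter fun t => F i t = r).card = Nr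

/-- `λ(t,t')`: the number of races (flights) in which teams `t` and `t'` compete together. -/
def pairCount {ι : Type} [Fintype ι] {Nt m : ℕ} (F : ι → Fin Nt → Fin m)
    (t t' : Fin Nt) : ℕ :=
  (Finset.univ.filter fun i => F i t = F i t').card

/-- minimal number of pairings over distinct pairs of teams -/
def lmin {ι : Type} [Fintype ι] {Nt m : ℕ} (F : ι → Fin Nt → Fin m)
    (h : (Finset.univ.offDiag : Finset (Fin Nt × Fin Nt)).Nonempty) : ℕ :=
  Finset.univ.offDiag.inf' h fun p => pairCount F p.1 p.2

/-- maximal number of pairings over distinct pairs of teams -/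
def lmax {ι : Type} [Fintype ι] {Nt m : ℕ} (F : ι → Fin Nt → Fin m)
    (h : (Finset.univ.offDiag : Finset (Fin Nt × Fin Nt)).Nonempty) : ℕ :=
  Finset.univ.offDiag.sup' h fun p => pairCount F p.1 p.2

theorem perfect_pairing_list_divisibility (Nt Nf Nr : ℕ) (hdvd : Nr ∣ Nt) (hNt : 1 < Nt)
    (F : Fin Nf → Fin Nt → Fin (Nt / Nr)) (hF : IsPairingList Nr F)
    (l : ℕ) (hperf : ∀ t t' : Fin Nt, t ≠ t' → pairCount F t t' = l) :
    (Nt - 1) ∣ Nf * (Nr - 1) := by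
  have hNr : 0 < Nr := Nat.pos_of_ne_zero (by rintro rfl; simp at hdvd; omega)
  have t0 : Fin Nt := ⟨0, by omega⟩
  have key : Nf * (Nr - 1) = (Nt - 1) * l := by
    have h1 : ∑ t' ∈ univ.erase t0, pairCount F t0 t' = (Nt - 1) * l := by
      rw [Finset.sum_congr rfl (fun t' ht' =>
        hperf t0 t' (Ne.symm (Finset.ne_of_mem_erase ht')))]
      simp [Finset.card_erase_of_mem]
    have h2 : ∑ t' ∈ univ.erase t0, pairCount F t0 t' = Nf * (Nr - 1) := by
      have : ∑ t' ∈ univ.erase t0, pairCount F t0 t'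
          = ∑ i : Fin Nf, ((univ.erase t0).filter fun t' => F i t0 = F i t').card := by
        simp only [pairCount, Finset.card_filter]
        rw [Finset.sum_comm]
      rw [this]
      have h3 : ∀ i : Fin Nf,
          ((univ.erase t0).filter fun t' => F i t0 = F i t').card = Nr - 1 := by
        intro i
        have := hF i (F i t0)
        have heq : (univ.erase t0).filter (fun t' => F i t0 = F i t')
            = (univ.filter fun t' => F i t' = F i t0).erase t0 := by
          ext x
          simp [eq_comm, and_comm]
        rw [heq, Finset.card_erase_of_mem (by simp), this]
      simp [h3, Finset.sum_const]
    omega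
  exact key ▸ Dvd.intro l rfl
end

section
/- If there exists a perfect pairing list with parameters N_teams, N_flights, N_inrace, then the total number of races satisfies N_races ≥ N_teams + N_flights − 1. -/
open Finset

theorem bose_inequality (Nt Nf Nr : ℕ) (hdvd : Nr ∣ Nt) (h1 : 1 < Nr) (h2 : Nr < Nt)
    (F : Fin Nf → Fin Nt → Fin (Nt / Nr)) (hF : IsPairingList Nr F)
    (l : ℕ) (hl : 1 ≤ l)
    (hperf : ∀ t t' : Fin Nt, t ≠ t' → pairCount F t t' = l) :
    Nt + Nf - 1 ≤ Nt * Nf / Nr := by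
  have hNr0 : 0 < Nr := by omega
  have hNt0 : 0 < Nt := by omega
  have hmk : Nt / Nr * Nr = Nt := Nat.div_mul_cancel hdvd
  have hm2 : 2 ≤ Nt / Nr := by
    rw [Nat.le_div_iff_mul_le hNr0]
    obtain ⟨c, hc⟩ := hdvd
    have hc2 : 2 ≤ c := by
      rcases c with _ | _ | c
      · omega
      · rw [Nat.mul_one] at hc; omega
      · omega
    calc 2 * Nr = Nr * 2 := Nat.mul_comm _ _
      _ ≤ Nr * c := Nat.mul_le_mul_left Nr hc2
      _ = Nt := hc.symm
  -- key counting identity: for each team t, sum of pairCount over other teams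
  have key : ∀ t : Fin Nt, ∑ t' ∈ univ.erase t, pairCount F t t' = Nf * (Nr - 1) := by
    intro t
    have h1 : ∀ i : Fin Nf,
        ((univ.erase t).filter fun t' => F i t = F i t').card = Nr - 1 := by
      intro i
      have hsub : (univ.erase t).filter (fun t' => F i t = F i t')
          = (univ.filter fun t' => F i t' = F i t).erase t := by
        ext x
        simp only [Finset.mem_filter, Finset.mem_erase, Finset.mem_univ, true_and,
          and_true]
        constructor
        · rintro ⟨hx, he⟩; exact ⟨hx, he.symm⟩
        · rintro ⟨hx, he⟩; exact ⟨hx, he.symm⟩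
      rw [hsub, Finset.card_erase_of_mem (by simp), hF i (F i t)]
    calc ∑ t' ∈ univ.erase t, pairCount F t t'
        = ∑ t' ∈ univ.erase t, ∑ i : Fin Nf, if F i t = F i t' then 1 else 0 := by
          refine Finset.sum_congr rfl fun t' _ => ?_
          unfold pairCount
          rw [Finset.card_filter]
      _ = ∑ i : Fin Nf, ∑ t' ∈ univ.erase t, if F i t = F i t' then 1 else 0 :=
          Finset.sum_comm
      _ = ∑ i : Fin Nf, (Nr - 1) := by
          refine Finset.sum_congr rfl fun i _ => ?_
          rw [← h1 i, Finset.card_filter]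
      _ = Nf * (Nr - 1) := by
          simp [Finset.sum_const, Finset.card_univ, Nat.mul_comm]
  -- the identity l*(Nt-1) = Nf*(Nr-1)
  have t0 : Fin Nt := ⟨0, hNt0⟩
  have hident : l * (Nt - 1) = Nf * (Nr - 1) := by
    have h := key t0
    have hrepl : ∑ t' ∈ univ.erase t0, pairCount F t0 t' = ∑ _t' ∈ univ.erase t0, l :=
      Finset.sum_congr rfl fun t' ht' =>
        hperf t0 t' fun hh => (Finset.mem_erase.mp ht').1 hh.symm
    rw [hrepl, Finset.sum_const, Finset.card_erase_of_mem (Finset.mem_univ _),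
      Finset.card_univ, Fintype.card_fin, smul_eq_mul] at h
    rw [mul_comm]
    exact h
  -- integrality: Nr - 1 ≤ l * ((Nt / Nr) - 1)
  have hkey2 : Nr - 1 ≤ l * ((Nt / Nr) - 1) := by
    set g := Nat.gcd (Nr - 1) (Nt - 1) with hg
    have hg0 : 0 < g := Nat.gcd_pos_of_pos_left _ (by omega)
    have hNt1 : Nt - 1 = (Nt / Nr) * (Nr - 1) + ((Nt / Nr) - 1) := by
      zify [show 1 ≤ Nr by omega, show 1 ≤ (Nt / Nr) by omega, show 1 ≤ Nt by omega]
      have hmk' : ((Nt / Nr) : ℤ) * Nr = Nt := by exact_mod_cast hmk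
      linarith [hmk']
    have hgm : g ∣ (Nt / Nr) - 1 := by
      have h5 : g ∣ (Nt - 1) - (Nt / Nr) * (Nr - 1) :=
        Nat.dvd_sub (Nat.gcd_dvd_right _ _) ((Nat.gcd_dvd_left _ _).mul_left (Nt / Nr))
      rwa [hNt1, Nat.add_sub_cancel_left] at h5
    have hdl : (Nr - 1) ∣ l * (Nt - 1) := hident ▸ dvd_mul_left _ _
    have hae : (Nr - 1) / g * g = Nr - 1 := Nat.div_mul_cancel (Nat.gcd_dvd_left _ _)
    have hbe : (Nt - 1) / g * g = Nt - 1 := Nat.div_mul_cancel (Nat.gcd_dvd_right _ _)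
    have hco : Nat.Coprime ((Nr - 1) / g) ((Nt - 1) / g) :=
      Nat.coprime_div_gcd_div_gcd hg0
    have hal : (Nr - 1) / g ∣ l := by
      have h6 : (Nr - 1) / g ∣ l * ((Nt - 1) / g) := by
        have h7 : (Nr - 1) / g * g ∣ (l * ((Nt - 1) / g)) * g := by
          rw [hae, mul_assoc, hbe]; exact hdl
        exact (Nat.mul_dvd_mul_iff_right hg0).mp h7
      exact hco.dvd_of_dvd_mul_right h6
    have hle1 : (Nr - 1) / g ≤ l := Nat.le_of_dvd (by omega) hal
    have hgle : g ≤ (Nt / Nr) - 1 := Nat.le_of_dvd (by omega) hgm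
    calc Nr - 1 = (Nr - 1) / g * g := hae.symm
      _ ≤ l * ((Nt / Nr) - 1) := Nat.mul_le_mul hle1 hgle
  -- rewrite division
  have hdiv : Nt * Nf / Nr = (Nt / Nr) * Nf := by
    rw [Nat.mul_comm Nt Nf, Nat.mul_div_assoc Nf hdvd, Nat.mul_comm]
  rw [hdiv]
  -- conclude
  have h6 : Nf * (Nr - 1) ≤ Nf * (l * ((Nt / Nr) - 1)) := Nat.mul_le_mul_left Nf hkey2
  have h7 : l * (Nt - 1) ≤ l * (Nf * ((Nt / Nr) - 1)) := by
    rw [hident]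
    calc Nf * (Nr - 1) ≤ Nf * (l * ((Nt / Nr) - 1)) := h6
      _ = l * (Nf * ((Nt / Nr) - 1)) := by ring
  have h8 : Nt - 1 ≤ Nf * ((Nt / Nr) - 1) := Nat.le_of_mul_le_mul_left h7 (by omega)
  have h11 : Nf * ((Nt / Nr) - 1) + Nf = (Nt / Nr) * Nf := by
    have hm1 : (Nt / Nr) - 1 + 1 = (Nt / Nr) := by omega
    calc Nf * ((Nt / Nr) - 1) + Nf = Nf * (((Nt / Nr) - 1) + 1) := (Nat.mul_succ _ _).symm
      _ = Nf * (Nt / Nr) := by rw [hm1]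
      _ = (Nt / Nr) * Nf := Nat.mul_comm _ _
  omega
end

section
/- Given a pairing list P with parameters N_teams, N_flights, N_inrace and an integer k with 0 < k < N_flights, there exists a pairing list P' with parameters N_teams, N_flights − k, N_inrace such that λ_max(P) − λ_min(P) ≤ λ_max(P') − λ_min(P') + k and λ_max(P') − λ_min(P') ≤ λ_max(P) − λ_min(P) + k. -/
open Finset

private lemma inf'_le_h {α : Type} {s : Finset α} (H : s.Nonempty) (f : α → ℕ) {b : α}
    (h : b ∈ s) : s.inf' H f ≤ f b :=
  Finset.inf'_le f h

private lemma le_sup'_h {α : Type} {s : Finset α} (H : s.Nonempty) (f : α → ℕ) {b : α}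
    (h : b ∈ s) : f b ≤ s.sup' H f :=
  Finset.le_sup' f h

set_option maxHeartbeats 1000000 in
theorem remove_flights (Nt Nf Nr k : ℕ) (hdvd : Nr ∣ Nt) (hNt : 1 < Nt)
    (hk0 : 0 < k) (hk : k < Nf)
    (hne : (Finset.univ.offDiag : Finset (Fin Nt × Fin Nt)).Nonempty)
    (F : Fin Nf → Fin Nt → Fin (Nt / Nr)) (hF : IsPairingList Nr F) :
    ∃ F' : Fin (Nf - k) → Fin Nt → Fin (Nt / Nr), IsPairingList Nr F' ∧
      ((lmax F hne : ℤ) - (lmin F hne : ℤ) ≤ (lmax F' hne : ℤ) - (lmin F' hne : ℤ) + k) ∧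
      ((lmax F' hne : ℤ) - (lmin F' hne : ℤ) ≤ (lmax F hne : ℤ) - (lmin F hne : ℤ) + k) := by
  have hle : Nf - k ≤ Nf := Nat.sub_le _ _
  set emb : Fin (Nf - k) ↪ Fin Nf := Fin.castLEEmb hle with hemb
  set F' : Fin (Nf - k) → Fin Nt → Fin (Nt / Nr) := fun j => F (emb j) with hF'def
  have hF' : IsPairingList Nr F' := fun i r => hF (emb i) r
  -- pairCount F' ≤ pairCount F
  have h1 : ∀ t t', pairCount F' t t' ≤ pairCount F t t' := by
    intro t t'
    have hsub : (Finset.univ.filter fun j : Fin (Nf - k) => F' j t = F' j t').map emb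
        ⊆ Finset.univ.filter fun i : Fin Nf => F i t = F i t' := by
      intro i hi
      simp only [Finset.mem_map, Finset.mem_filter, Finset.mem_univ, true_and] at hi ⊢
      obtain ⟨j, hj, rfl⟩ := hi
      exact hj
    have := Finset.card_le_card hsub
    simpa [pairCount, Finset.card_map] using this
  -- pairCount F ≤ pairCount F' + k
  have h2 : ∀ t t', pairCount F t t' ≤ pairCount F' t t' + k := by
    intro t t'
    have hsub : (Finset.univ.filter fun i : Fin Nf => F i t = F i t')
        ⊆ ((Finset.univ.filter fun j : Fin (Nf - k) => F' j t = F' j t').map emb)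
          ∪ (Finset.univ.filter fun i : Fin Nf => Nf - k ≤ i.val) := by
      intro i hi
      simp only [Finset.mem_filter, Finset.mem_univ, true_and] at hi
      rcases lt_or_ge i.val (Nf - k) with hlt | hge
      · apply Finset.mem_union_left
        simp only [Finset.mem_map, Finset.mem_filter, Finset.mem_univ, true_and]
        refine ⟨⟨i.val, hlt⟩, ?_, ?_⟩
        · simpa [hF'def, hemb, Fin.castLEEmb, Fin.castLE, Fin.ext_iff] using hi
        · simp [hemb, Fin.castLEEmb, Fin.castLE, Fin.ext_iff]
      · exact Finset.mem_union_right _ (Finset.mem_filter.mpr ⟨Finset.mem_univ _, hge⟩)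
    have hBcard : (Finset.univ.filter fun i : Fin Nf => Nf - k ≤ i.val).card = k := by
      have hA : (Finset.univ.filter fun i : Fin Nf => i.val < Nf - k).card = Nf - k := by
        have : (Finset.univ.filter fun i : Fin Nf => i.val < Nf - k)
            = (Finset.univ : Finset (Fin (Nf - k))).map emb := by
          ext i
          simp only [Finset.mem_filter, Finset.mem_univ, true_and, Finset.mem_map]
          constructor
          · intro hi
            exact ⟨⟨i.val, hi⟩, by simp [hemb, Fin.castLEEmb, Fin.castLE, Fin.ext_iff]⟩
          · rintro ⟨j, -, rfl⟩
            simpa [hemb, Fin.castLEEmb, Fin.castLE] using j.isLt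
        rw [this, Finset.card_map, Finset.card_univ, Fintype.card_fin]
      have htot := Finset.card_filter_add_card_filter_not
        (s := (Finset.univ : Finset (Fin Nf))) (p := fun i : Fin Nf => i.val < Nf - k)
      simp only [Finset.card_univ, Fintype.card_fin, hA, not_lt] at htot
      omega
    calc pairCount F t t' ≤ _ := Finset.card_le_card hsub
      _ ≤ ((Finset.univ.filter fun j : Fin (Nf - k) => F' j t = F' j t').map emb).card
          + (Finset.univ.filter fun i : Fin Nf => Nf - k ≤ i.val).card :=
        Finset.card_union_le _ _
      _ = pairCount F' t t' + k := by rw [Finset.card_map, hBcard]; rfl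
  -- lmax/lmin comparisons
  have hmax1 : lmax F' hne ≤ lmax F hne := by
    apply Finset.sup'_le
    intro p hp
    exact le_trans (h1 p.1 p.2) (le_sup'_h hne (fun p => pairCount F p.1 p.2) hp)
  have hmin1 : lmin F' hne ≤ lmin F hne := by
    apply Finset.le_inf'
    intro p hp
    exact le_trans (inf'_le_h hne (fun p => pairCount F' p.1 p.2) hp) (h1 p.1 p.2)
  have hmax2 : lmax F hne ≤ lmax F' hne + k := by
    obtain ⟨p, hp, hpe⟩ := Finset.exists_mem_eq_sup' hne (fun p => pairCount F p.1 p.2)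
    calc lmax F hne = pairCount F p.1 p.2 := hpe
      _ ≤ pairCount F' p.1 p.2 + k := h2 p.1 p.2
      _ ≤ lmax F' hne + k :=
        Nat.add_le_add_right (le_sup'_h hne (fun p => pairCount F' p.1 p.2) hp) k
  have hmin2 : lmin F hne ≤ lmin F' hne + k := by
    obtain ⟨p, hp, hpe⟩ := Finset.exists_mem_eq_inf' hne (fun p => pairCount F' p.1 p.2)
    calc lmin F hne ≤ pairCount F p.1 p.2 := inf'_le_h hne (fun p => pairCount F p.1 p.2) hp
      _ ≤ pairCount F' p.1 p.2 + k := h2 p.1 p.2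
      _ = lmin F' hne + k := by rw [lmin, ← hpe]
  exact ⟨F', hF', by omega, by omega⟩
end

section
/- If P is a perfect pairing list with parameters N_teams, N_flights, N_inrace where N_teams > N_inrace > 1 and N_flights ≥ 2, then the pairing list P' obtained by removing one flight from P satisfies λ_max(P') − λ_min(P') = 1. -/
open Finset

lemma filter_subtype_card' {α : Type} [Fintype α] [DecidableEq α] (j : α)
    (P : α → Prop) [DecidablePred P] :
    (univ.filter fun i : {i : α // i ≠ j} => P i.1).card
      = ((univ.filter P).erase j).card := by
  apply Finset.card_bij (fun i _ => i.1)
  · intro a ha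
    simp only [mem_filter, mem_univ, true_and] at ha
    simp [a.2, ha]
  · intro a _ b _ h; exact Subtype.ext h
  · intro b hb
    simp only [mem_erase, mem_filter, mem_univ, true_and] at hb
    exact ⟨⟨b, hb.1⟩, by simp [hb.2], rfl⟩

theorem remove_one_flight_from_perfect (Nt Nf Nr : ℕ) (hdvd : Nr ∣ Nt)
    (h1 : 1 < Nr) (h2 : Nr < Nt) (hNf : 2 ≤ Nf)
    (hne : (Finset.univ.offDiag : Finset (Fin Nt × Fin Nt)).Nonempty)
    (F : Fin Nf → Fin Nt → Fin (Nt / Nr)) (hF : IsPairingList Nr F)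
    (l : ℕ) (hperf : ∀ t t' : Fin Nt, t ≠ t' → pairCount F t t' = l)
    (j : Fin Nf) :
    lmax (fun (i : {i : Fin Nf // i ≠ j}) => F i.1) hne
      - lmin (fun (i : {i : Fin Nf // i ≠ j}) => F i.1) hne = 1 := by
  set F' : {i : Fin Nf // i ≠ j} → Fin Nt → Fin (Nt / Nr) := fun i => F i.1 with hF'
  -- key formula for pairCount of F'
  have key : ∀ t t' : Fin Nt, t ≠ t' →
      pairCount F' t t' = if F j t = F j t' then l - 1 else l := by
    intro t t' htt
    have hS := hperf t t' htt
    unfold pairCount at hS ⊢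
    rw [filter_subtype_card' j (fun i => F i t = F i t')]
    by_cases h : F j t = F j t'
    · rw [if_pos h, Finset.card_erase_of_mem (by simp [h]), hS]
    · rw [if_neg h, Finset.erase_eq_of_notMem (by simp [h]), hS]
  -- a pair together in flight j
  have ht0 : (0 : ℕ) < Nt := by omega
  obtain ⟨t0⟩ := Fin.pos_iff_nonempty.mp ht0
  have hcard := hF j (F j t0)
  obtain ⟨a, ha, b, hb, hab⟩ := Finset.one_lt_card.mp (by rw [hcard]; exact h1)
  simp only [mem_filter, mem_univ, true_and] at ha hb
  -- a pair apart in flight j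
  have hapart : ∃ t', t' ≠ t0 ∧ F j t' ≠ F j t0 := by
    have h3 : (univ.filter fun t => F j t = F j t0) ⊂ univ := by
      apply Finset.ssubset_univ_iff.mpr
      intro h
      have := hF j (F j t0)
      rw [h, Finset.card_univ, Fintype.card_fin] at this
      omega
    obtain ⟨t', _, ht'⟩ := Finset.exists_of_ssubset h3
    simp only [mem_filter, mem_univ, true_and] at ht'
    exact ⟨t', fun h => ht' (h ▸ rfl), ht'⟩
  obtain ⟨t', ht'0, ht'ne⟩ := hapart
  -- l ≥ 1
  have hl : 1 ≤ l := by
    have := hperf a b hab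
    unfold pairCount at this
    rw [← this]
    exact Finset.card_pos.mpr ⟨j, by simp [ha, hb]⟩
  have hmax : lmax F' hne = l := by
    unfold lmax
    apply le_antisymm
    · apply Finset.sup'_le
      intro p hp
      rw [Finset.mem_offDiag] at hp
      rw [key p.1 p.2 hp.2.2]
      split <;> omega
    · apply Finset.le_sup'_of_le _ (b := (t', t0)) (by simp [Finset.mem_offDiag, ht'0])
      rw [key t' t0 ht'0, if_neg ht'ne]
  have hmin : lmin F' hne = l - 1 := by
    unfold lmin
    apply le_antisymm
    · apply Finset.inf'_le_of_le _ (b := (a, b)) (by simp [Finset.mem_offDiag, hab])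
      rw [key a b hab, if_pos (ha.trans hb.symm)]
    · apply Finset.le_inf'
      intro p hp
      rw [Finset.mem_offDiag] at hp
      rw [key p.1 p.2 hp.2.2]
      split <;> omega
  rw [hmax, hmin]
  omega
end

section
/- If both a perfect pairing list with parameters N_teams, N_flights, N_inrace and a perfect pairing list with parameters N_teams, N_flights − 1, N_inrace exist, then (N_teams − 1) divides (N_inrace − 1); in particular this is impossible when N_teams > N_inrace > 1. -/
open Finset

lemma count_lemma_aux {Nt k m Nr : ℕ} (hNt : 1 < Nt)
    (F : Fin m → Fin Nt → Fin k) (hF : IsPairingList Nr F)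
    (l : ℕ) (hl : ∀ t t' : Fin Nt, t ≠ t' → pairCount F t t' = l) :
    l * (Nt - 1) = m * (Nr - 1) := by
  have h0 : (0 : ℕ) < Nt := by omega
  set t0 : Fin Nt := ⟨0, h0⟩ with ht0
  have hcard : (univ.filter (fun t' : Fin Nt => t' ≠ t0)).card = Nt - 1 := by
    rw [Finset.filter_ne']
    simp [Finset.card_erase_of_mem]
  have key : ∑ t' ∈ univ.filter (fun t' : Fin Nt => t' ≠ t0), pairCount F t0 t'
      = m * (Nr - 1) := by
    have hswap : ∑ t' ∈ univ.filter (fun t' : Fin Nt => t' ≠ t0), pairCount F t0 t'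
        = ∑ i : Fin m, (univ.filter (fun t' : Fin Nt => t' ≠ t0 ∧ F i t0 = F i t')).card := by
      simp only [pairCount, Finset.card_filter]
      rw [Finset.sum_comm]
      simp only [Finset.card_filter, Finset.sum_filter, ite_not, ite_and, ne_eq]
    rw [hswap]
    have hfix : ∀ i : Fin m,
        (univ.filter (fun t' : Fin Nt => t' ≠ t0 ∧ F i t0 = F i t')).card = Nr - 1 := by
      intro i
      have h1 := hF i (F i t0)
      have heq : (univ.filter fun t' : Fin Nt => t' ≠ t0 ∧ F i t0 = F i t')
          = (univ.filter fun t => F i t = F i t0).erase t0 := by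
        ext x
        simp only [Finset.mem_filter, Finset.mem_erase, Finset.mem_univ, true_and]
        constructor
        · rintro ⟨h2, h3⟩; exact ⟨h2, h3.symm⟩
        · rintro ⟨h2, h3⟩; exact ⟨h2, h3.symm⟩
      rw [heq, Finset.card_erase_of_mem (by simp), h1]
    simp [hfix]
  rw [Finset.sum_congr rfl (fun t' ht' => hl t0 t'
    (by simp at ht'; exact fun h => ht' h.symm)), Finset.sum_const, hcard,
    smul_eq_mul, mul_comm] at key
  omega

theorem perfect_for_consecutive_flight_numbers (Nt Nf Nr : ℕ) (hdvd : Nr ∣ Nt)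
    (hNt : 1 < Nt) (hNf : 1 ≤ Nf)
    (h₁ : ∃ F : Fin Nf → Fin Nt → Fin (Nt / Nr), IsPairingList Nr F ∧
      ∃ l : ℕ, ∀ t t' : Fin Nt, t ≠ t' → pairCount F t t' = l)
    (h₂ : ∃ F : Fin (Nf - 1) → Fin Nt → Fin (Nt / Nr), IsPairingList Nr F ∧
      ∃ l : ℕ, ∀ t t' : Fin Nt, t ≠ t' → pairCount F t t' = l) :
    (Nt - 1) ∣ (Nr - 1) ∧ (1 < Nr → Nr < Nt → False) := by
  obtain ⟨F₁, hF₁, l₁, hl₁⟩ := h₁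
  obtain ⟨F₂, hF₂, l₂, hl₂⟩ := h₂
  have e₁ := count_lemma_aux hNt F₁ hF₁ l₁ hl₁
  have e₂ := count_lemma_aux hNt F₂ hF₂ l₂ hl₂
  have hd1 : (Nt - 1) ∣ Nf * (Nr - 1) := ⟨l₁, by rw [← e₁, mul_comm]⟩
  have hd2 : (Nt - 1) ∣ (Nf - 1) * (Nr - 1) := ⟨l₂, by rw [← e₂, mul_comm]⟩
  have hsub : Nf * (Nr - 1) - (Nf - 1) * (Nr - 1) = Nr - 1 := by
    rw [← Nat.sub_mul]
    have : Nf - (Nf - 1) = 1 := by omega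
    rw [this, one_mul]
  have hdvd' : (Nt - 1) ∣ (Nr - 1) := hsub ▸ Nat.dvd_sub hd1 hd2
  refine ⟨hdvd', fun h1 h2 => ?_⟩
  have := Nat.le_of_dvd (by omega) hdvd'
  omega
end

section
/- For any pairing list P with parameters N_teams, N_flights, N_inrace (N_teams > N_inrace > 1), λ_min(P) ≤ N_flights·(N_inrace − 1)/(N_teams − 1) ≤ λ_max(P); in particular, if (N_teams − 1) does not divide N_flights·(N_inrace − 1), then λ_max(P) − λ_min(P) ≥ 1. -/
open Finset

set_option maxRecDepth 4000 in
lemma total_sum {Nt m Nf Nr : ℕ} (F : Fin Nf → Fin Nt → Fin m)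
    (hF : IsPairingList Nr F) :
    ∑ p ∈ (Finset.univ.offDiag : Finset (Fin Nt × Fin Nt)), pairCount F p.1 p.2
      = Nf * (Nt * Nr) - Nf * Nt := by
  have step : ∀ i : Fin Nf,
      ∑ p ∈ (Finset.univ ×ˢ Finset.univ : Finset (Fin Nt × Fin Nt)),
        (if F i p.1 = F i p.2 then 1 else 0) = Nt * Nr := by
    intro i
    rw [Finset.sum_product]
    have : ∀ t : Fin Nt, (∑ t' : Fin Nt, if F i t = F i t' then 1 else 0) = Nr := by
      intro t
      have he : (Finset.univ.filter fun t' => F i t = F i t') =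
          (Finset.univ.filter fun t' => F i t' = F i t) := by
        ext x; simp only [Finset.mem_filter]; exact and_congr_right fun _ => eq_comm
      rw [← hF i (F i t), ← he, Finset.card_filter]
    simp [this, Finset.sum_const, mul_comm]
  have diagsum : ∀ i : Fin Nf,
      ∑ p ∈ (Finset.univ.diag : Finset (Fin Nt × Fin Nt)),
        (if F i p.1 = F i p.2 then 1 else 0) = Nt := by
    intro i
    rw [Finset.sum_diag]
    simp
  have split : ∀ i : Fin Nf,
      ∑ p ∈ (Finset.univ.offDiag : Finset (Fin Nt × Fin Nt)),
        (if F i p.1 = F i p.2 then 1 else 0) = Nt * Nr - Nt := by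
    intro i
    have := Finset.sum_union (f := fun p : Fin Nt × Fin Nt => if F i p.1 = F i p.2 then 1 else 0)
      (Finset.disjoint_diag_offDiag (Finset.univ : Finset (Fin Nt)))
    rw [Finset.diag_union_offDiag] at this
    rw [step i, diagsum i] at this
    beta_reduce at this
    omega
  have : ∑ p ∈ (Finset.univ.offDiag : Finset (Fin Nt × Fin Nt)), pairCount F p.1 p.2
      = ∑ i : Fin Nf, ∑ p ∈ (Finset.univ.offDiag : Finset (Fin Nt × Fin Nt)),
          (if F i p.1 = F i p.2 then 1 else 0) := by
    simp only [pairCount, Finset.card_filter]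
    rw [Finset.sum_comm]
  rw [this, Finset.sum_congr rfl fun i _ => split i, Finset.sum_const]
  simp [Nat.mul_sub, mul_assoc]

theorem lmin_le_average_le_lmax (Nt Nf Nr : ℕ) (hdvd : Nr ∣ Nt)
    (h1 : 1 < Nr) (h2 : Nr < Nt)
    (hne : (Finset.univ.offDiag : Finset (Fin Nt × Fin Nt)).Nonempty)
    (F : Fin Nf → Fin Nt → Fin (Nt / Nr)) (hF : IsPairingList Nr F) :
    ((lmin F hne : ℚ) ≤ ((Nf : ℚ) * ((Nr : ℚ) - 1)) / ((Nt : ℚ) - 1) ∧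
      ((Nf : ℚ) * ((Nr : ℚ) - 1)) / ((Nt : ℚ) - 1) ≤ (lmax F hne : ℚ)) ∧
    (¬ (Nt - 1) ∣ Nf * (Nr - 1) → 1 ≤ lmax F hne - lmin F hne) := by

  have hNt : 2 < Nt := by omega
  have hNtpos : 0 < Nt := by omega
  have hcard : (Finset.univ.offDiag : Finset (Fin Nt × Fin Nt)).card = Nt * Nt - Nt := by
    simp [Finset.offDiag_card]
  have htot := total_sum F hF
  have e1 : ∀ c : ℕ, (Nt * Nt - Nt) * c = Nt * ((Nt - 1) * c) := by
    intro c; rw [Nat.sub_mul Nt 1 c, Nat.mul_sub, one_mul, Nat.sub_mul, mul_assoc]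
  have e2 : Nf * (Nt * Nr) - Nf * Nt = Nt * (Nf * (Nr - 1)) := by
    rw [Nat.mul_sub, mul_one, Nat.mul_sub]; ring_nf
  -- sum bounds
  have h_lo : (Nt * Nt - Nt) * lmin F hne ≤ Nf * (Nt * Nr) - Nf * Nt := by
    rw [← htot, ← hcard]
    have := Finset.card_nsmul_le_sum (Finset.univ.offDiag)
      (fun p : Fin Nt × Fin Nt => pairCount F p.1 p.2) (lmin F hne)
      (fun p hp => Finset.inf'_le _ hp)
    simpa [smul_eq_mul] using this
  have h_hi : Nf * (Nt * Nr) - Nf * Nt ≤ (Nt * Nt - Nt) * lmax F hne := by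
    rw [← htot, ← hcard]
    have := Finset.sum_le_card_nsmul (Finset.univ.offDiag)
      (fun p : Fin Nt × Fin Nt => pairCount F p.1 p.2) (lmax F hne)
      (fun p hp => Finset.le_sup' (fun p : Fin Nt × Fin Nt => pairCount F p.1 p.2) hp)
    simpa [smul_eq_mul] using this
  have hA : (Nt - 1) * lmin F hne ≤ Nf * (Nr - 1) := by
    have := h_lo; rw [e1, e2] at this
    exact Nat.le_of_mul_le_mul_left this hNtpos
  have hB : Nf * (Nr - 1) ≤ (Nt - 1) * lmax F hne := by
    have := h_hi; rw [e1, e2] at this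
    exact Nat.le_of_mul_le_mul_left this hNtpos
  have hq : (0 : ℚ) < (Nt : ℚ) - 1 := by
    have : (1 : ℚ) < (Nt : ℚ) := by exact_mod_cast (by omega : 1 < Nt)
    linarith
  have hcastA : (lmin F hne : ℚ) * ((Nt : ℚ) - 1) ≤ (Nf : ℚ) * ((Nr : ℚ) - 1) := by
    have h' := (Nat.cast_le (α := ℚ)).2 hA
    push_cast [Nat.cast_sub (by omega : 1 ≤ Nt), Nat.cast_sub (by omega : 1 ≤ Nr)] at h'
    linarith
  have hcastB : (Nf : ℚ) * ((Nr : ℚ) - 1) ≤ (lmax F hne : ℚ) * ((Nt : ℚ) - 1) := by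
    have h' := (Nat.cast_le (α := ℚ)).2 hB
    push_cast [Nat.cast_sub (by omega : 1 ≤ Nt), Nat.cast_sub (by omega : 1 ≤ Nr)] at h'
    linarith
  refine ⟨⟨?_, ?_⟩, ?_⟩
  · rw [le_div_iff₀ hq]; exact hcastA
  · rw [div_le_iff₀ hq]; exact hcastB
  · intro hnd
    by_contra hcon
    obtain ⟨p0, hp0⟩ := id hne
    have hle : lmin F hne ≤ lmax F hne :=
      le_trans (Finset.inf'_le _ hp0)
        (Finset.le_sup' (fun p : Fin Nt × Fin Nt => pairCount F p.1 p.2) hp0)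
    have heq : lmax F hne = lmin F hne := by omega
    have hall : ∀ p ∈ (Finset.univ.offDiag : Finset (Fin Nt × Fin Nt)),
        pairCount F p.1 p.2 = lmin F hne := by
      intro p hp
      refine le_antisymm ?_ (Finset.inf'_le _ hp)
      rw [← heq]
      exact Finset.le_sup' (fun p : Fin Nt × Fin Nt => pairCount F p.1 p.2) hp
    have hsum : ∑ p ∈ (Finset.univ.offDiag : Finset (Fin Nt × Fin Nt)),
        pairCount F p.1 p.2 = (Nt * Nt - Nt) * lmin F hne := by
      rw [Finset.sum_congr rfl hall, Finset.sum_const, smul_eq_mul, hcard]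
    have hkey : Nt * ((Nt - 1) * lmin F hne) = Nt * (Nf * (Nr - 1)) := by
      rw [← e1, ← e2, ← hsum, htot]
    have : (Nt - 1) * lmin F hne = Nf * (Nr - 1) :=
      Nat.eq_of_mul_eq_mul_left hNtpos hkey
    exact hnd ⟨lmin F hne, this.symm⟩
end
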